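/- Let μ = i₁i₂⋯i_r and ν = j₁j₂⋯j_s with r, s ≥ 1, where i₁ ≥ i₂ ≥ ⋯ ≥ i_r and j₁ ≥ j₂ ≥ ⋯ ≥ j_s are Lyndon words. Suppose i₁ ≥ j₁, that the first letters of i₁ and j₁ are equal (call this letter a), and that a occurs exactly twice in i₁ and exactly twice in j₁. Then the lexicographically greatest shuffle w of μ and ν satisfies: either w = i₁ ⬝ w′ for some shuffle w′ of i₂⋯i_r and ν, or i₁ = j₁ and w = j₁ ⬝ w″ for some shuffle w″ of μ and j₂⋯j_s. In particular, if i₁ > j₁ then the first alternative holds. -/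

import Mathlib

/-- `IsShuffle μ ν w` means that `w` is an interleaving (shuffle) of the words `μ` and `ν`. -/
inductive IsShuffle {α : Type*} : List α → List α → List α → Prop
  | nil : IsShuffle [] [] []
  | left {a : α} {μ ν w : List α} : IsShuffle μ ν w → IsShuffle (a :: μ) ν (a :: w)
  | right {a : α} {μ ν w : List α} : IsShuffle μ ν w → IsShuffle μ (a :: ν) (a :: w)

/-- A nonempty word `u` is a Lyndon word if it is lexicographically strictly smaller than
every proper nonempty suffix of itself. -/
def IsLyndon {α : Type*} [LinearOrder α] (u : List α) : Prop :=
  u ≠ [] ∧ ∀ v : List α, v ≠ [] → v ≠ u → v <:+ u → u < v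

/-!
Greedy choice: if `v ≤ c :: u`, some greatest shuffle of `c :: u` and `v` starts with the letter
`c` taken from the first word, since a letter taken from `v` instead can always be postponed
without making the shuffle smaller. For a Lyndon word `u` and `v ≤ u ++ M` this applies to every
letter of `u`, because each proper suffix `s` of `u` satisfies `u ++ M < s ++ M`; so the greatest
shuffle of `u ++ M` and `v` is `u` followed by a greatest shuffle of `M` and `v`.

If `ν ≤ μ` this gives the first alternative with `u = i₁`. If `μ < ν`, then `i₁ = j₁`: otherwise
`i₁ = j₁ ++ r` with `r` a proper suffix of `i₁` that avoids the letter `a` (both `i₁` and `j₁`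
contain it twice), so `r` starts with a letter bigger than `a`, while `j₂ ⋯ j_s` starts with a
letter at most `a`, contradicting `μ < ν`. The second alternative then follows with `u = j₁`.
-/

namespace List

variable {α : Type*} [LinearOrder α]

theorem cons_le_cons_self_iff (a : α) {x y : List α} : a :: x ≤ a :: y ↔ x ≤ y := by
  simp only [← not_lt, cons_lt_cons_self]

theorem head_le_of_le {a b : α} {x y : List α} (h : a :: x ≤ b :: y) : a ≤ b :=
  h.lt_or_eq.elim head_le_of_lt fun h => (cons.inj h).1.le

theorem lt_of_append_lt_append_left {z x y : List α} (h : z ++ x < z ++ y) : x < y := by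
  induction z with
  | nil => exact h
  | cons c z ih => exact ih (cons_lt_cons_self.1 h)

theorem append_lt_append_of_lt_of_not_prefix {x y : List α} (h : x < y) (hxy : ¬ x <+: y)
    (s t : List α) : x ++ s < y ++ t := by
  induction x generalizing y with
  | nil => exact absurd (nil_prefix) hxy
  | cons a x ih =>
    obtain _ | ⟨b, y⟩ := y
    · exact absurd h (not_lt_nil _)
    rcases cons_lt_cons_iff.1 h with hab | ⟨rfl, hxy'⟩
    · exact cons_lt_cons_iff.2 (Or.inl hab)
    · exact cons_lt_cons_self.2 (ih hxy' fun hp => hxy (cons_prefix_cons.2 ⟨rfl, hp⟩))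

end List

open List

section Shuffle

variable {α : Type*}

theorem IsShuffle.symm {u v w : List α} (h : IsShuffle u v w) : IsShuffle v u w := by
  induction h with
  | nil => exact .nil
  | left _ ih => exact .right ih
  | right _ ih => exact .left ih

theorem isShuffle_nil_left : ∀ v : List α, IsShuffle [] v v
  | [] => .nil
  | _ :: v => .right (isShuffle_nil_left v)

theorem isShuffle_append : ∀ u v : List α, IsShuffle u v (u ++ v)
  | [], v => isShuffle_nil_left v
  | _ :: u, v => .left (isShuffle_append u v)

def shuffles (u v : List α) : Set (List α) := {w | IsShuffle u v w}

theorem shuffles_comm (u v : List α) : shuffles u v = shuffles v u :=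
  Set.ext fun _ => ⟨IsShuffle.symm, IsShuffle.symm⟩

variable [LinearOrder α]

/- When `x` next takes from `V` the same letter that heads `U`, take it from `U` instead and
transfer it along with `z`; when it takes a smaller one, reading `U` first already wins. -/
theorem IsShuffle.exists_ge_of_transfer {z U V x : List α} (hVU : V ≤ U)
    (hx : IsShuffle (z ++ U) V x) : ∃ t, IsShuffle U (z ++ V) t ∧ x ≤ t := by
  induction U generalizing z V x with
  | nil =>
    obtain rfl : V = [] := hVU.lt_or_eq.resolve_left (not_lt_nil V)
    exact ⟨x, by simpa using hx.symm, le_rfl⟩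
  | cons d U ihU =>
    induction z generalizing x with
    | nil => exact ⟨x, hx, le_rfl⟩
    | cons c z ihz =>
      cases hx with
      | left h =>
        obtain ⟨t, ht, hle⟩ := ihz h
        exact ⟨c :: t, ht.right, cons_le_cons c hle⟩
      | @right b _ V x h =>
        rcases (head_le_of_le hVU).lt_or_eq with hbd | rfl
        · exact ⟨_, .left (isShuffle_append U _), (cons_lt_cons_iff.2 (Or.inl hbd)).le⟩
        · obtain ⟨t, ht, hle⟩ :=
            ihU (z := c :: z ++ [b]) ((cons_le_cons_self_iff b).1 hVU) (by simpa using h)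
          exact ⟨b :: t, .left (by simpa using ht), cons_le_cons b hle⟩

theorem IsShuffle.exists_le_cons {c : α} {u v s : List α} (hv : v ≤ c :: u)
    (hs : IsShuffle (c :: u) v s) : ∃ t, IsShuffle u v t ∧ s ≤ c :: t := by
  cases hs with
  | left h => exact ⟨_, h, le_rfl⟩
  | @right b _ v s h =>
    rcases (head_le_of_le hv).lt_or_eq with hbc | rfl
    · exact ⟨u ++ b :: v, isShuffle_append _ _, (cons_lt_cons_iff.2 (Or.inl hbc)).le⟩
    · obtain ⟨t, ht, hle⟩ := exists_ge_of_transfer (z := [b]) ((cons_le_cons_self_iff b).1 hv) h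
      exact ⟨t, ht, cons_le_cons b hle⟩

theorem IsGreatest.shuffles_cons {c : α} {u v w : List α} (hw : IsGreatest (shuffles (c :: u) v) w)
    (hv : v ≤ c :: u) : ∃ w', w = c :: w' ∧ IsGreatest (shuffles u v) w' := by
  obtain ⟨t, ht, hle⟩ := IsShuffle.exists_le_cons hv hw.1
  have hwt : w = c :: t := hle.antisymm (hw.2 ht.left)
  exact ⟨t, hwt, ht, fun t' ht' => (cons_le_cons_self_iff c).1 (hwt ▸ hw.2 ht'.left)⟩

theorem IsGreatest.shuffles_append {b u v w : List α} (hw : IsGreatest (shuffles (b ++ u) v) w)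
    (hv : ∀ s, s <:+ b → s ≠ [] → v ≤ s ++ u) :
    ∃ w', w = b ++ w' ∧ IsGreatest (shuffles u v) w' := by
  induction b generalizing w with
  | nil => exact ⟨w, rfl, hw⟩
  | cons c b ih =>
    obtain ⟨w₁, rfl, hw₁⟩ := hw.shuffles_cons (hv _ suffix_rfl (cons_ne_nil c b))
    obtain ⟨w', rfl, hw'⟩ := ih hw₁ fun s hs hs0 => hv s (hs.trans (suffix_cons c b)) hs0
    exact ⟨w', rfl, hw'⟩

end Shuffle

section Lyndon

variable {α : Type*} [LinearOrder α]

theorem IsLyndon.append_lt_append_of_suffix {u s : List α} (hu : IsLyndon u) (hs : s <:+ u)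
    (hs0 : s ≠ []) (hsu : s ≠ u) (M N : List α) : u ++ M < s ++ N :=
  append_lt_append_of_lt_of_not_prefix (hu.2 s hs0 hsu hs)
    (fun hp => hsu (hs.eq_of_length (hs.length_le.antisymm hp.length_le))) M N

theorem IsGreatest.shuffles_append_of_isLyndon {u M v w : List α}
    (hw : IsGreatest (shuffles (u ++ M) v) w) (hu : IsLyndon u) (hv : v ≤ u ++ M) :
    ∃ w', w = u ++ w' ∧ IsGreatest (shuffles M v) w' := by
  refine hw.shuffles_append fun s hs hs0 => ?_
  by_cases hsu : s = u
  · exact hsu ▸ hv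
  · exact (hv.trans_lt (hu.append_lt_append_of_suffix hs hs0 hsu M M)).le

theorem IsLyndon.eq_of_append_lt_append {a : α} {i j M N : List α} (hi : IsLyndon i)
    (hia : i.head? = some a) (hcount : i.count a ≤ j.count a) (hN : ∀ b ∈ N.head?, b ≤ a)
    (hji : j ≤ i) (h : i ++ M < j ++ N) : i = j := by
  by_contra hne
  by_cases hpre : j <+: i
  swap
  · exact (append_lt_append_of_lt_of_not_prefix (hji.lt_of_ne' hne) hpre N M).asymm h
  obtain ⟨r, rfl⟩ := hpre
  have har : a ∉ r := by
    rw [count_append] at hcount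
    exact count_eq_zero.1 (by omega)
  obtain ⟨c, r, rfl⟩ := exists_cons_of_ne_nil fun hr : r = [] => hne (by simp [hr])
  obtain _ | ⟨d, j⟩ := j
  · exact har (mem_of_mem_head? hia)
  have hda : d = a := by simpa using hia
  subst d
  have hac : a < c := by
    have hsuf := hi.append_lt_append_of_suffix (suffix_append _ _) (cons_ne_nil c r)
      (fun h => by have := congrArg length h; simp at this; omega) [] []
    simp only [append_nil, cons_append] at hsuf
    exact (head_le_of_lt hsuf).lt_of_ne fun hac => har (hac ▸ mem_cons_self)
  have hrN : c :: r ++ M < N := lt_of_append_lt_append_left (z := a :: j) (by simpa using h)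
  obtain _ | ⟨b, N⟩ := N
  · exact absurd hrN (not_lt_nil _)
  exact hrN.asymm (cons_lt_cons_iff.2 (Or.inl ((hN b rfl).trans_lt hac)))

end Lyndon

theorem stmt3_general {α : Type*} [LinearOrder α]
    (i₁ : List α) (itl : List (List α)) (j₁ : List α) (jtl : List (List α))
    (hLI : ∀ u ∈ i₁ :: itl, IsLyndon u)
    (hLJ : ∀ u ∈ j₁ :: jtl, IsLyndon u)
    (hdecJ : List.Chain' (fun u v : List α => v ≤ u) (j₁ :: jtl))
    (hi : i₁ ≠ [])
    (hij : j₁ ≤ i₁)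
    (hcounti : List.count (i₁.head hi) i₁ = 2)
    (hcountj : List.count (i₁.head hi) j₁ = 2)
    (w : List α)
    (hshuf : IsShuffle ((i₁ :: itl).flatten) ((j₁ :: jtl).flatten) w)
    (hgreatest : ∀ w', IsShuffle ((i₁ :: itl).flatten) ((j₁ :: jtl).flatten) w' → w' ≤ w) :
    ((∃ w', IsShuffle itl.flatten ((j₁ :: jtl).flatten) w' ∧ w = i₁ ++ w') ∨
      (i₁ = j₁ ∧ ∃ w'', IsShuffle ((i₁ :: itl).flatten) jtl.flatten w'' ∧ w = j₁ ++ w'')) ∧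
    (j₁ < i₁ → ∃ w', IsShuffle itl.flatten ((j₁ :: jtl).flatten) w' ∧ w = i₁ ++ w') := by
  have hw : IsGreatest (shuffles (i₁ ++ itl.flatten) (j₁ ++ jtl.flatten)) w := ⟨hshuf, hgreatest⟩
  by_cases hνμ : j₁ ++ jtl.flatten ≤ i₁ ++ itl.flatten
  · obtain ⟨w', rfl, hw'⟩ := hw.shuffles_append_of_isLyndon (hLI i₁ mem_cons_self) hνμ
    exact ⟨Or.inl ⟨w', hw'.1, rfl⟩, fun _ => ⟨w', hw'.1, rfl⟩⟩
  have hμν := lt_of_not_ge hνμ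
  have hjtl : ∀ b ∈ jtl.flatten.head?, b ≤ i₁.head hi := by
    obtain _ | ⟨j₂, jtl⟩ := jtl
    · simp
    obtain ⟨c, j₂, rfl⟩ := exists_cons_of_ne_nil (hLJ j₂ (by simp)).1
    obtain ⟨a, i₁, rfl⟩ := exists_cons_of_ne_nil hi
    simpa using head_le_of_le ((isChain_cons_cons.1 hdecJ).1.trans hij)
  have hij' : i₁ = j₁ := (hLI i₁ mem_cons_self).eq_of_append_lt_append (head?_eq_some_head hi)
    (hcounti.trans hcountj.symm).le hjtl hij hμν
  rw [shuffles_comm] at hw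
  obtain ⟨w'', rfl, hw''⟩ := hw.shuffles_append_of_isLyndon (hLJ j₁ mem_cons_self) hμν.le
  exact ⟨Or.inr ⟨hij', w'', hw''.1.symm, rfl⟩, fun h => absurd (hij' ▸ h) (lt_irrefl _)⟩

/-- with `i₁ ≥ j₁`, equal first letters `a`, and `a` occurring exactly twice in
`i₁` and exactly twice in `j₁`, the lexicographically greatest shuffle `w` of `μ = i₁ ⋯ i_r`
and `ν = j₁ ⋯ j_s` is of the form `i₁ ++ (shuffle of i₂ ⋯ i_r and ν)`, or `i₁ = j₁` and
`w = j₁ ++ (shuffle of μ and j₂ ⋯ j_s)`. In particular, if `i₁ > j₁` then the first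
alternative holds. -/
theorem stmt3 {α : Type*} [LinearOrder α]
    (i₁ : List α) (itl : List (List α)) (j₁ : List α) (jtl : List (List α))
    (hLI : ∀ u ∈ i₁ :: itl, IsLyndon u)
    (hLJ : ∀ u ∈ j₁ :: jtl, IsLyndon u)
    (hdecI : List.Chain' (fun u v : List α => v ≤ u) (i₁ :: itl))
    (hdecJ : List.Chain' (fun u v : List α => v ≤ u) (j₁ :: jtl))
    (hi : i₁ ≠ []) (hj : j₁ ≠ [])
    (hij : j₁ ≤ i₁)
    (hhead : i₁.head hi = j₁.head hj)
    (hcounti : List.count (i₁.head hi) i₁ = 2)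
    (hcountj : List.count (i₁.head hi) j₁ = 2)
    (w : List α)
    (hshuf : IsShuffle ((i₁ :: itl).flatten) ((j₁ :: jtl).flatten) w)
    (hgreatest : ∀ w', IsShuffle ((i₁ :: itl).flatten) ((j₁ :: jtl).flatten) w' → w' ≤ w) :
    ((∃ w', IsShuffle itl.flatten ((j₁ :: jtl).flatten) w' ∧ w = i₁ ++ w') ∨
      (i₁ = j₁ ∧ ∃ w'', IsShuffle ((i₁ :: itl).flatten) jtl.flatten w'' ∧ w = j₁ ++ w'')) ∧
    (j₁ < i₁ → ∃ w', IsShuffle itl.flatten ((j₁ :: jtl).flatten) w' ∧ w = i₁ ++ w') :=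
  stmt3_general i₁ itl j₁ jtl hLI hLJ hdecJ hi hij hcounti hcountj w hshuf hgreatest
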